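/- Let s, t ∈ ℝ. The following are equivalent: (i) for every n ≥ 1 and every x : {1,…,n} → ℝ one has ∑_{i=1}^{n} ∑_{j=1}^{n} (min{i,j} + s + t·δ_{ij})·x_i·x_j ≥ 0 (i.e. the infinite matrix A_∞(s,t) = [min{i,j} + s + t·δ_{ij}]_{i,j≥1} is positive semidefinite on finitely supported vectors); (ii) 1 + 4t ≥ 0 and 1 + 2s + √(1+4t) ≥ 0. -/

import Mathlib

/-!
With the tail sums `S k = ∑_{i ≥ k} x i` (so `S n = 0` and `x i = S i - S (i + 1)`), the form
becomes `∑_{k<n} S k ^ 2 + s S 0 ^ 2 + t ∑_{k<n} (S k - S (k + 1)) ^ 2`, because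
`min (i + 1) (j + 1)` counts the `k` with `k ≤ i` and `k ≤ j`.

If `1 + 4t ≥ 0`, write `t = (b + 1) b` with `b = (√(1 + 4t) - 1) / 2`; summation by parts turns the
form into `(1 + s + b) S 0 ^ 2 + ∑_{k<n} ((b + 1) S (k + 1) - b S k) ^ 2`, and
`2 (1 + s + b) = 1 + 2s + √(1 + 4t)`.

Conversely, truncated geometric sequences `S k = ρ ^ k` with `|ρ| < 1` give in the limit
`(1 + t (1 - ρ) ^ 2) / (1 - ρ ^ 2) + s ≥ 0`. Substituting `ρ = (d - 1) / (d + 1)`, this says that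
`d ^ 2 + 2 (1 + 2s) d + 1 + 4t ≥ 0` for every `d > 0`, which forces both conditions.
-/

open Finset Filter Topology

def minQuadForm (s t : ℝ) (n : ℕ) (x : Fin n → ℝ) : ℝ :=
  ∑ i : Fin n, ∑ j : Fin n,
    (((min (i.1 + 1) (j.1 + 1) : ℕ) : ℝ) + s + if i = j then t else 0) * x i * x j

def tailSum {n : ℕ} (x : Fin n → ℝ) (k : ℕ) : ℝ :=
  ∑ i : Fin n, if k ≤ i.1 then x i else 0

def tailForm (s t : ℝ) (n : ℕ) (S : ℕ → ℝ) : ℝ :=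
  ∑ k ∈ range n, S k ^ 2 + s * S 0 ^ 2 + t * ∑ k ∈ range n, (S k - S (k + 1)) ^ 2

section TailSum

variable {n : ℕ}

lemma tailSum_of_le (x : Fin n → ℝ) {k : ℕ} (hk : n ≤ k) : tailSum x k = 0 :=
  sum_eq_zero fun i _ => if_neg (by omega)

lemma tailSum_zero (x : Fin n → ℝ) : tailSum x 0 = ∑ i, x i := by
  simp [tailSum]

lemma tailSum_sub_tailSum_succ (x : Fin n → ℝ) (i : Fin n) :
    tailSum x i - tailSum x (i + 1) = x i := by
  rw [tailSum, tailSum, ← sum_sub_distrib]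
  have (j : Fin n) : ((if i.1 ≤ j.1 then x j else 0) - if i.1 + 1 ≤ j.1 then x j else 0) =
      if i = j then x j else 0 := by
    split_ifs <;> simp_all [Fin.ext_iff] <;> omega
  simp_rw [this, sum_ite_eq, if_pos (mem_univ i)]

lemma tailSum_sub_succ {S : ℕ → ℝ} (hS : S n = 0) {k : ℕ} (hk : k ≤ n) :
    tailSum (fun i : Fin n => S i - S (i + 1)) k = S k := by
  rw [tailSum, Fin.sum_univ_eq_sum_range (fun i => if k ≤ i then S i - S (i + 1) else 0),
    ← sum_filter, range_eq_Ico, Ico_filter_le, max_eq_right (Nat.zero_le k), sum_Ico_eq_sub _ hk,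
    sum_range_sub', sum_range_sub', hS]
  ring

lemma natCast_min_succ_eq_sum (i j : Fin n) :
    ((min (i.1 + 1) (j.1 + 1) : ℕ) : ℝ) =
      ∑ k ∈ range n, if k ≤ i.1 ∧ k ≤ j.1 then (1 : ℝ) else 0 := by
  rw [sum_boole, Nat.cast_inj, ← card_range (min (i.1 + 1) (j.1 + 1))]
  congr 1
  ext k
  simp only [mem_range, mem_filter]
  omega

lemma sum_sum_min_mul_eq_sum_tailSum_sq (x : Fin n → ℝ) :
    ∑ i : Fin n, ∑ j : Fin n, ((min (i.1 + 1) (j.1 + 1) : ℕ) : ℝ) * x i * x j =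
      ∑ k ∈ range n, tailSum x k ^ 2 := by
  simp_rw [tailSum, sq, sum_mul_sum, ite_zero_mul_ite_zero, natCast_min_succ_eq_sum, sum_mul,
    ite_mul, one_mul, zero_mul]
  rw [eq_comm, Finset.sum_comm]
  exact Finset.sum_congr rfl fun _ _ => Finset.sum_comm

end TailSum

section QuadForm

variable {s t : ℝ} {n : ℕ}

lemma minQuadForm_eq (x : Fin n → ℝ) :
    minQuadForm s t n x =
      ∑ k ∈ range n, tailSum x k ^ 2 + s * tailSum x 0 ^ 2 + t * ∑ i, x i ^ 2 := by
  simp_rw [minQuadForm, add_mul, sum_add_distrib, sum_sum_min_mul_eq_sum_tailSum_sq, tailSum_zero,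
    sq, sum_mul_sum, mul_sum, ite_mul, zero_mul, sum_ite_eq, if_pos (mem_univ _), mul_assoc]

lemma minQuadForm_sub_succ {S : ℕ → ℝ} (hS : S n = 0) :
    minQuadForm s t n (fun i => S i - S (i + 1)) = tailForm s t n S := by
  rw [minQuadForm_eq, tailForm, tailSum_sub_succ hS n.zero_le,
    Fin.sum_univ_eq_sum_range (fun k => (S k - S (k + 1)) ^ 2)]
  congr 2
  exact sum_congr rfl fun k hk => by rw [tailSum_sub_succ hS (mem_range.1 hk).le]

lemma minQuadForm_eq_tailForm_tailSum (x : Fin n → ℝ) :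
    minQuadForm s t n x = tailForm s t n (tailSum x) := by
  conv_lhs => rw [← funext (tailSum_sub_tailSum_succ x)]
  exact minQuadForm_sub_succ (tailSum_of_le x le_rfl)

end QuadForm

lemma tailForm_eq_add_sum_sq (s b : ℝ) (S : ℕ → ℝ) (n : ℕ) :
    tailForm s ((b + 1) * b) n S =
      (1 + s + b) * S 0 ^ 2 + ∑ k ∈ range n, ((b + 1) * S (k + 1) - b * S k) ^ 2
        - (b + 1) * S n ^ 2 := by
  induction n with
  | zero => simp [tailForm]; ring
  | succ n ih =>
    simp only [tailForm, sum_range_succ] at ih ⊢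
    linear_combination ih

lemma tailForm_nonneg {s t : ℝ} (ht : 0 ≤ 1 + 4 * t) (hs : 0 ≤ 1 + 2 * s + √(1 + 4 * t))
    {n : ℕ} {S : ℕ → ℝ} (hS : S n = 0) : 0 ≤ tailForm s t n S := by
  obtain ⟨b, hb⟩ : ∃ b : ℝ, √(1 + 4 * t) = 2 * b + 1 := ⟨(√(1 + 4 * t) - 1) / 2, by ring⟩
  have htb : t = (b + 1) * b := by
    linear_combination (-1 / 4 : ℝ) * Real.sq_sqrt ht + (√(1 + 4 * t) + 2 * b + 1) / 4 * hb
  rw [htb, tailForm_eq_add_sum_sq, hS, zero_pow two_ne_zero, mul_zero, sub_zero]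
  have hb0 : 0 ≤ 1 + s + b := by linarith
  exact add_nonneg (mul_nonneg hb0 (sq_nonneg _)) (sum_nonneg fun k _ => sq_nonneg _)

lemma tailForm_geometric (s t ρ : ℝ) (N : ℕ) :
    tailForm s t (N + 1) (fun k => if k ≤ N then ρ ^ k else 0) =
      ∑ k ∈ range (N + 1), (ρ ^ 2) ^ k + s
        + t * ((1 - ρ) ^ 2 * ∑ k ∈ range N, (ρ ^ 2) ^ k + (ρ ^ 2) ^ N) := by
  rw [tailForm, sum_range_succ (fun k => (_ - _) ^ 2), mul_sum]
  simp only [if_pos (Nat.zero_le N), pow_zero, one_pow, mul_one, le_refl, if_true,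
    show ¬ N + 1 ≤ N by omega, if_false, sub_zero]
  have hsq : ∀ k ∈ range (N + 1), (if k ≤ N then ρ ^ k else 0) ^ 2 = (ρ ^ 2) ^ k :=
    fun k hk => by
      rw [if_pos (Nat.lt_succ_iff.1 (mem_range.1 hk)), ← pow_mul, ← pow_mul, mul_comm]
  have hdiff : ∀ k ∈ range N,
      ((if k ≤ N then ρ ^ k else 0) - if k + 1 ≤ N then ρ ^ (k + 1) else 0) ^ 2 =
        (1 - ρ) ^ 2 * (ρ ^ 2) ^ k := fun k hk => by
    rw [if_pos (mem_range.1 hk).le, if_pos (Nat.succ_le_of_lt (mem_range.1 hk))]; ring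
  rw [sum_congr rfl hsq, sum_congr rfl hdiff]
  ring

lemma tendsto_tailForm_geometric (s t : ℝ) {ρ : ℝ} (hρ : |ρ| < 1) :
    Tendsto (fun N => tailForm s t (N + 1) (fun k => if k ≤ N then ρ ^ k else 0)) atTop
      (𝓝 ((1 + t * (1 - ρ) ^ 2) / (1 - ρ ^ 2) + s)) := by
  have hq : ρ ^ 2 < 1 := by rwa [sq_lt_one_iff_abs_lt_one]
  have hgeom := (hasSum_geometric_of_lt_one (sq_nonneg ρ) hq).tendsto_sum_nat
  have hlim := (((tendsto_add_atTop_iff_nat 1).2 hgeom).add_const s).add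
    (((hgeom.const_mul ((1 - ρ) ^ 2)).add
      (tendsto_pow_atTop_nhds_zero_of_lt_one (sq_nonneg ρ) hq)).const_mul t)
  simp_rw [tailForm_geometric]
  convert hlim using 2
  field_simp
  ring

lemma quadratic_nonneg_of_forall_tailForm_nonneg {s t : ℝ}
    (h : ∀ (N : ℕ) (S : ℕ → ℝ), S (N + 1) = 0 → 0 ≤ tailForm s t (N + 1) S)
    {d : ℝ} (hd : 0 < d) :
    0 ≤ d ^ 2 + 2 * (1 + 2 * s) * d + (1 + 4 * t) := by
  set ρ := (d - 1) / (d + 1)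
  have hρ : |ρ| < 1 := by
    rw [abs_lt, lt_div_iff₀ (by linarith), div_lt_one (by linarith)]
    constructor <;> linarith
  have hlim := ge_of_tendsto' (tendsto_tailForm_geometric s t hρ) fun N => h N _ (by simp)
  have hρd : d ^ 2 + 2 * (1 + 2 * s) * d + (1 + 4 * t) =
      4 * d * ((1 + t * (1 - ρ) ^ 2) / (1 - ρ ^ 2) + s) := by
    have hρsq : 1 - ρ ^ 2 = 4 * d / (d + 1) ^ 2 := by
      simp only [ρ]
      field_simp
      ring
    rw [hρsq]
    simp only [ρ]
    field_simp
    ring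
  rw [hρd]
  exact mul_nonneg (by positivity) hlim

lemma nonneg_and_add_sqrt_nonneg_of_quadratic_nonneg {b c : ℝ}
    (h : ∀ d > 0, 0 ≤ d ^ 2 + 2 * b * d + c) : 0 ≤ c ∧ 0 ≤ b + √c := by
  have hc : 0 ≤ c := by
    have hcont : Continuous fun d : ℝ => d ^ 2 + 2 * b * d + c := by fun_prop
    simpa using ge_of_tendsto ((hcont.tendsto 0).mono_left nhdsWithin_le_nhds)
      (eventually_nhdsWithin_of_forall (s := Set.Ioi 0) h)
  refine ⟨hc, not_lt.1 fun hneg => ?_⟩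
  have hsqrt := Real.sq_sqrt hc
  have := h (√c - (b + √c)) (by linarith [Real.sqrt_nonneg c])
  nlinarith [Real.sqrt_nonneg c]

/-- The infinite matrix `A_∞(s,t) = [min{i,j} + s + t·δᵢⱼ]_{i,j≥1}` is positive
semidefinite (i.e. every finite truncation of the quadratic form is nonnegative)
iff `1 + 4t ≥ 0` and `1 + 2s + √(1+4t) ≥ 0`. -/
theorem A_infty_posSemidef_iff (s t : ℝ) :
    (∀ n : ℕ, 1 ≤ n → ∀ x : Fin n → ℝ,
        0 ≤ ∑ i : Fin n, ∑ j : Fin n,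
          (((min (i.1 + 1) (j.1 + 1) : ℕ) : ℝ) + s + if i = j then t else 0)
            * x i * x j) ↔
      0 ≤ 1 + 4 * t ∧ 0 ≤ 1 + 2 * s + Real.sqrt (1 + 4 * t) := by
  change (∀ n, 1 ≤ n → ∀ x, 0 ≤ minQuadForm s t n x) ↔ _
  constructor
  · intro h
    have htail (N : ℕ) (S : ℕ → ℝ) (hS : S (N + 1) = 0) : 0 ≤ tailForm s t (N + 1) S :=
      minQuadForm_sub_succ hS ▸ h (N + 1) N.succ_pos _
    exact nonneg_and_add_sqrt_nonneg_of_quadratic_nonneg fun d hd =>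
      quadratic_nonneg_of_forall_tailForm_nonneg htail hd
  · rintro ⟨ht, hs⟩ n - x
    rw [minQuadForm_eq_tailForm_tailSum]
    exact tailForm_nonneg ht hs (tailSum_of_le x le_rfl)
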